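/- Define H : (0,∞) × ℝ → ℝ by H(t,x) = (1/π) ∫_0^π e^{-2t(1-cos θ)} cos(xθ) dθ (so H(t,n) = h_t(n) for n ∈ ℤ). For all k, ℓ ∈ ℕ there exists C = C(k,ℓ) > 0 such that |∂_x^k ∂_t^ℓ H(t,x)| ≤ C t^{-(ℓ + k/2)} for all t > 0 and all x ∈ ℝ. -/

import Mathlib

/-- The continuous extension of the discrete heat kernel:
`H(t,x) = (1/π) ∫_0^π e^{-2t(1-cos θ)} cos(xθ) dθ`. -/
noncomputable def Hker (t x : ℝ) : ℝ :=
  (1 / Real.pi) * ∫ θ in (0:ℝ)..Real.pi,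
    Real.exp (-2 * t * (1 - Real.cos θ)) * Real.cos (x * θ)

open Real MeasureTheory Set

noncomputable def Kfun (ℓ k : ℕ) (t x : ℝ) : ℝ :=
  (1 / π) * ∫ θ in (0:ℝ)..π,
    (-(2 * (1 - cos θ))) ^ ℓ * θ ^ k *
      (exp (-(2 * t * (1 - cos θ))) * cos (x * θ + k * (π / 2)))

lemma contInt (ℓ k : ℕ) (t x : ℝ) : Continuous fun θ : ℝ =>
    (-(2 * (1 - cos θ))) ^ ℓ * θ ^ k *
      (exp (-(2 * t * (1 - cos θ))) * cos (x * θ + k * (π / 2))) := by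
  fun_prop

lemma hasDerivT (ℓ k : ℕ) (x t : ℝ) :
    HasDerivAt (fun t' => Kfun ℓ k t' x) (Kfun (ℓ + 1) k t x) t := by
  unfold Kfun
  have main := intervalIntegral.hasDerivAt_integral_of_dominated_loc_of_deriv_le
    (μ := volume) (a := (0:ℝ)) (b := π) (x₀ := t) (s := Metric.ball t 1)
    (F := fun t' θ => (-(2 * (1 - cos θ))) ^ ℓ * θ ^ k *
      (exp (-(2 * t' * (1 - cos θ))) * cos (x * θ + k * (π / 2))))
    (F' := fun t' θ => (-(2 * (1 - cos θ))) ^ (ℓ + 1) * θ ^ k *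
      (exp (-(2 * t' * (1 - cos θ))) * cos (x * θ + k * (π / 2))))
    (bound := fun _ => 4 ^ (ℓ + 1) * π ^ k * exp (4 * (|t| + 1)))
    (Metric.ball_mem_nhds t one_pos)
    (Filter.Eventually.of_forall fun t' => (contInt ℓ k t' x).aestronglyMeasurable)
    ((contInt ℓ k t x).intervalIntegrable 0 π)
    (contInt (ℓ + 1) k t x).aestronglyMeasurable
    ?_ intervalIntegrable_const ?_
  · exact main.2.const_mul (1 / π)
  · refine Filter.Eventually.of_forall fun θ hθ t' ht' => ?_
    rw [Set.uIoc_of_le pi_pos.le] at hθ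
    obtain ⟨hθ0, hθπ⟩ := hθ
    have hc1 := Real.cos_le_one θ
    have hcm := Real.neg_one_le_cos θ
    have hd : |t' - t| < 1 := by rwa [Metric.mem_ball, Real.dist_eq] at ht'
    have ht'' : |t'| ≤ |t| + 1 := by
      have := abs_sub_abs_le_abs_sub t' t; linarith
    rw [Real.norm_eq_abs]
    calc |(-(2 * (1 - cos θ))) ^ (ℓ + 1) * θ ^ k *
          (exp (-(2 * t' * (1 - cos θ))) * cos (x * θ + k * (π / 2)))|
        = |(-(2 * (1 - cos θ)))| ^ (ℓ + 1) * |θ| ^ k *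
          (exp (-(2 * t' * (1 - cos θ))) * |cos (x * θ + k * (π / 2))|) := by
          rw [abs_mul, abs_mul, abs_mul, abs_pow, abs_pow, Real.abs_exp]
      _ ≤ 4 ^ (ℓ + 1) * π ^ k * (exp (4 * (|t| + 1)) * 1) := by
          gcongr
          · rw [abs_neg, abs_of_nonneg (by linarith)]; linarith
          · rw [abs_of_nonneg hθ0.le]; exact hθπ
          · nlinarith [le_abs_self t', neg_abs_le t', abs_nonneg t]
          · exact Real.abs_cos_le_one _
      _ = 4 ^ (ℓ + 1) * π ^ k * exp (4 * (|t| + 1)) := by rw [mul_one]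
  · refine Filter.Eventually.of_forall fun θ _ t' _ => ?_
    have h1 : HasDerivAt (fun s : ℝ => -(2 * s * (1 - cos θ)))
        (-(2 * (1 - cos θ))) t' := by
      have heq : (fun s : ℝ => -(2 * s * (1 - cos θ)))
          = fun s => (-(2 * (1 - cos θ))) * s := by funext s; ring
      rw [heq]
      simpa using (hasDerivAt_id t').const_mul (-(2 * (1 - cos θ)))
    have h3 := ((h1.exp).mul_const (cos (x * θ + k * (π / 2)))).const_mul
      ((-(2 * (1 - cos θ))) ^ ℓ * θ ^ k)
    convert h3 using 1
    · rfl
    ring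

lemma hasDerivX (ℓ k : ℕ) (t x : ℝ) :
    HasDerivAt (fun x' => Kfun ℓ k t x') (Kfun ℓ (k + 1) t x) x := by
  unfold Kfun
  have main := intervalIntegral.hasDerivAt_integral_of_dominated_loc_of_deriv_le
    (μ := volume) (a := (0:ℝ)) (b := π) (x₀ := x) (s := Metric.ball x 1)
    (F := fun x' θ => (-(2 * (1 - cos θ))) ^ ℓ * θ ^ k *
      (exp (-(2 * t * (1 - cos θ))) * cos (x' * θ + k * (π / 2))))
    (F' := fun x' θ => (-(2 * (1 - cos θ))) ^ ℓ * θ ^ (k + 1) *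
      (exp (-(2 * t * (1 - cos θ))) * cos (x' * θ + (k + 1 : ℕ) * (π / 2))))
    (bound := fun _ => 4 ^ ℓ * π ^ (k + 1) * exp (4 * |t|))
    (Metric.ball_mem_nhds x one_pos)
    (Filter.Eventually.of_forall fun x' => (contInt ℓ k t x').aestronglyMeasurable)
    ((contInt ℓ k t x).intervalIntegrable 0 π)
    (contInt ℓ (k + 1) t x).aestronglyMeasurable
    ?_ intervalIntegrable_const ?_
  · exact main.2.const_mul (1 / π)
  · refine Filter.Eventually.of_forall fun θ hθ x' _ => ?_
    rw [Set.uIoc_of_le pi_pos.le] at hθ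
    obtain ⟨hθ0, hθπ⟩ := hθ
    have hc1 := Real.cos_le_one θ
    have hcm := Real.neg_one_le_cos θ
    rw [Real.norm_eq_abs]
    calc |(-(2 * (1 - cos θ))) ^ ℓ * θ ^ (k + 1) *
          (exp (-(2 * t * (1 - cos θ))) * cos (x' * θ + (k + 1 : ℕ) * (π / 2)))|
        = |(-(2 * (1 - cos θ)))| ^ ℓ * |θ| ^ (k + 1) *
          (exp (-(2 * t * (1 - cos θ))) * |cos (x' * θ + (k + 1 : ℕ) * (π / 2))|) := by
          rw [abs_mul, abs_mul, abs_mul, abs_pow, abs_pow, Real.abs_exp]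
      _ ≤ 4 ^ ℓ * π ^ (k + 1) * (exp (4 * |t|) * 1) := by
          gcongr
          · rw [abs_neg, abs_of_nonneg (by linarith)]; linarith
          · rw [abs_of_nonneg hθ0.le]; exact hθπ
          · nlinarith [le_abs_self t, neg_abs_le t]
          · exact Real.abs_cos_le_one _
      _ = 4 ^ ℓ * π ^ (k + 1) * exp (4 * |t|) := by rw [mul_one]
  · refine Filter.Eventually.of_forall fun θ _ x' _ => ?_
    have h1 : HasDerivAt (fun s : ℝ => s * θ + k * (π / 2)) θ x' := by
      simpa using ((hasDerivAt_id x').mul_const θ).add_const ((k : ℝ) * (π / 2))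
    have h3 := ((h1.cos).const_mul (exp (-(2 * t * (1 - cos θ))))).const_mul
      ((-(2 * (1 - cos θ))) ^ ℓ * θ ^ k)
    have hc : cos (x' * θ + ((k + 1 : ℕ) : ℝ) * (π / 2))
        = -sin (x' * θ + (k : ℝ) * (π / 2)) := by
      push_cast
      rw [show x' * θ + ((k : ℝ) + 1) * (π / 2)
          = (x' * θ + (k : ℝ) * (π / 2)) + π / 2 by ring, Real.cos_add_pi_div_two]
    convert h3 using 1
    · rfl
    rw [hc]; ring

lemma Hker_eq (t x : ℝ) : Hker t x = Kfun 0 0 t x := by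
  unfold Hker Kfun
  congr 1
  apply intervalIntegral.integral_congr
  intro θ _
  simp only [pow_zero, one_mul, Nat.cast_zero, zero_mul, add_zero, neg_mul]

lemma iterT (ℓ : ℕ) (x t : ℝ) :
    iteratedDeriv ℓ (fun t' => Hker t' x) t = Kfun ℓ 0 t x := by
  induction ℓ generalizing t with
  | zero => simp [iteratedDeriv_zero, Hker_eq]
  | succ n ih =>
    rw [iteratedDeriv_succ]
    have : iteratedDeriv n (fun t' => Hker t' x) = fun t' => Kfun n 0 t' x :=
      funext fun t' => ih t'
    rw [this]
    exact (hasDerivT n 0 x t).deriv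

lemma iterX (ℓ k : ℕ) (t x : ℝ) :
    iteratedDeriv k (fun x' => Kfun ℓ 0 t x') x = Kfun ℓ k t x := by
  induction k generalizing x with
  | zero => simp [iteratedDeriv_zero]
  | succ n ih =>
    rw [iteratedDeriv_succ]
    have : iteratedDeriv n (fun x' => Kfun ℓ 0 t x') = fun x' => Kfun ℓ n t x' :=
      funext fun x' => ih x'
    rw [this]
    exact (hasDerivX ℓ n t x).deriv

lemma aux1 (c : ℝ) (hc : 0 < c) (m : ℕ) (u : ℝ) (hu : 0 ≤ u) :
    u ^ m * exp (-(c * u ^ 2)) ≤ 1 + m.factorial / c ^ m := by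
  have hcm : (0:ℝ) < c ^ m := by positivity
  have hE : (0:ℝ) < exp (c * u ^ 2) := Real.exp_pos _
  have h1 : (c * u ^ 2) ^ m / m.factorial ≤ exp (c * u ^ 2) :=
    Real.pow_div_factorial_le_exp (x := c * u ^ 2) (by positivity) m
  have hfac : (0:ℝ) < m.factorial := by exact_mod_cast m.factorial_pos
  have h2 : u ^ m ≤ 1 + (m.factorial / c ^ m) * exp (c * u ^ 2) := by
    rcases le_total u 1 with h | h
    · have : u ^ m ≤ 1 := pow_le_one₀ hu h
      nlinarith [mul_pos (div_pos hfac hcm) hE]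
    · have h1u : (1:ℝ) ≤ u := h
      have hum : u ^ m ≤ u ^ (2 * m) := pow_le_pow_right₀ h1u (by omega)
      have he : (c * u ^ 2) ^ m = c ^ m * u ^ (2 * m) := by
        rw [mul_pow, pow_mul]
      have h3 : c ^ m * u ^ (2 * m) ≤ m.factorial * exp (c * u ^ 2) := by
        rw [← he]
        rw [div_le_iff₀ hfac] at h1
        linarith [h1]
      have h4 : u ^ (2 * m) ≤ m.factorial / c ^ m * exp (c * u ^ 2) := by
        rw [div_mul_eq_mul_div, le_div_iff₀ hcm]
        nlinarith
      linarith
  have hmul : exp (c * u ^ 2) * exp (-(c * u ^ 2)) = 1 := by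
    rw [← Real.exp_add]; simp
  have hEneg : exp (-(c * u ^ 2)) ≤ 1 := Real.exp_le_one_iff.mpr (neg_nonpos.mpr (by positivity))
  calc u ^ m * exp (-(c * u ^ 2))
      ≤ (1 + m.factorial / c ^ m * exp (c * u ^ 2)) * exp (-(c * u ^ 2)) :=
        mul_le_mul_of_nonneg_right h2 (Real.exp_pos _).le
    _ = exp (-(c * u ^ 2)) + m.factorial / c ^ m * (exp (c * u ^ 2) * exp (-(c * u ^ 2))) := by
        ring
    _ = exp (-(c * u ^ 2)) + m.factorial / c ^ m := by rw [hmul, mul_one]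
    _ ≤ 1 + m.factorial / c ^ m := by linarith

lemma ptBound (ℓ k : ℕ) (t : ℝ) (ht : 0 < t) (x θ : ℝ)
    (hθ0 : 0 < θ) (hθπ : θ ≤ π) :
    |(-(2 * (1 - cos θ))) ^ ℓ * θ ^ k *
        (exp (-(2 * t * (1 - cos θ))) * cos (x * θ + k * (π / 2)))|
      ≤ (1 + (2 * ℓ + k).factorial / (4 / π ^ 2) ^ (2 * ℓ + k)) /
          Real.sqrt t ^ (2 * ℓ + k) := by
  have hπ := pi_pos
  set c : ℝ := 4 / π ^ 2 with hcdef
  have hc : 0 < c := by positivity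
  set m : ℕ := 2 * ℓ + k with hmdef
  have hc1 := Real.cos_le_one θ
  have hone : 1 - θ ^ 2 / 2 ≤ cos θ := Real.one_sub_sq_div_two_le_cos
  have hA0 : (0:ℝ) ≤ 2 * (1 - cos θ) := by linarith
  have hst : 0 < Real.sqrt t := Real.sqrt_pos.mpr ht
  -- lower bound : c * θ^2 ≤ 2 * (1 - cos θ)
  have hlow : c * θ ^ 2 ≤ 2 * (1 - cos θ) := by
    have hs : θ / π ≤ sin (θ / 2) := by
      have h := Real.mul_le_sin (x := θ / 2) (by linarith) (by linarith)
      have : 2 / π * (θ / 2) = θ / π := by ring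
      linarith
    have hsq : sin (θ / 2) ^ 2 = (1 - cos θ) / 2 := by
      have h := Real.cos_two_mul (θ / 2)
      have h2 : 2 * (θ / 2) = θ := by ring
      rw [h2] at h
      have h3 := Real.sin_sq_add_cos_sq (θ / 2)
      linarith
    have hθπ0 : 0 ≤ θ / π := by positivity
    have h2 : (θ / π) ^ 2 ≤ sin (θ / 2) ^ 2 := by nlinarith
    have h3 : (θ / π) ^ 2 = θ ^ 2 / π ^ 2 := div_pow θ π 2
    have h4 : c * θ ^ 2 = 4 * (θ ^ 2 / π ^ 2) := by rw [hcdef]; ring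
    linarith
  have hexp : exp (-(2 * t * (1 - cos θ))) ≤ exp (-(c * t * θ ^ 2)) := by
    rw [Real.exp_le_exp]
    nlinarith
  have h2sq : (θ * Real.sqrt t) ^ 2 = θ ^ 2 * t := by
    rw [mul_pow, Real.sq_sqrt ht.le]
  calc |(-(2 * (1 - cos θ))) ^ ℓ * θ ^ k *
        (exp (-(2 * t * (1 - cos θ))) * cos (x * θ + k * (π / 2)))|
      = (2 * (1 - cos θ)) ^ ℓ * θ ^ k *
        (exp (-(2 * t * (1 - cos θ))) * |cos (x * θ + k * (π / 2))|) := by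
        rw [abs_mul, abs_mul, abs_mul, abs_pow, abs_pow, Real.abs_exp, abs_neg,
          abs_of_nonneg hA0, abs_of_nonneg hθ0.le]
    _ ≤ (θ ^ 2) ^ ℓ * θ ^ k * (exp (-(c * t * θ ^ 2)) * 1) := by
        gcongr
        · linarith
        · exact Real.abs_cos_le_one _
    _ = θ ^ m * exp (-(c * t * θ ^ 2)) := by
        rw [mul_one, ← pow_mul, ← pow_add]
    _ = (θ * Real.sqrt t) ^ m * exp (-(c * (θ * Real.sqrt t) ^ 2)) /
          Real.sqrt t ^ m := by
        rw [h2sq, mul_pow]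
        field_simp
    _ ≤ (1 + m.factorial / c ^ m) / Real.sqrt t ^ m := by
        gcongr
        exact aux1 c hc m (θ * Real.sqrt t) (by positivity)

lemma Kbound (ℓ k : ℕ) (t : ℝ) (ht : 0 < t) (x : ℝ) :
    |Kfun ℓ k t x| ≤ (1 + (2 * ℓ + k).factorial / (4 / π ^ 2) ^ (2 * ℓ + k)) /
      Real.sqrt t ^ (2 * ℓ + k) := by
  have hπ := pi_pos
  have hC0 : (0:ℝ) ≤ (1 + (2 * ℓ + k).factorial / (4 / π ^ 2) ^ (2 * ℓ + k)) /
      Real.sqrt t ^ (2 * ℓ + k) := by positivity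
  unfold Kfun
  have hB : ∀ θ ∈ Set.uIoc (0:ℝ) π, ‖(-(2 * (1 - cos θ))) ^ ℓ * θ ^ k *
        (exp (-(2 * t * (1 - cos θ))) * cos (x * θ + k * (π / 2)))‖
      ≤ (1 + (2 * ℓ + k).factorial / (4 / π ^ 2) ^ (2 * ℓ + k)) /
          Real.sqrt t ^ (2 * ℓ + k) := by
    intro θ hθ
    rw [Set.uIoc_of_le pi_pos.le] at hθ
    rw [Real.norm_eq_abs]
    exact ptBound ℓ k t ht x θ hθ.1 hθ.2
  have hInt := intervalIntegral.norm_integral_le_of_norm_le_const hB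
  rw [sub_zero, abs_of_nonneg hπ.le, Real.norm_eq_abs] at hInt
  rw [abs_mul, abs_of_nonneg (by positivity : (0:ℝ) ≤ 1 / π)]
  calc 1 / π * |∫ θ in (0:ℝ)..π, (-(2 * (1 - cos θ))) ^ ℓ * θ ^ k *
        (exp (-(2 * t * (1 - cos θ))) * cos (x * θ + k * (π / 2)))|
      ≤ 1 / π * ((1 + (2 * ℓ + k).factorial / (4 / π ^ 2) ^ (2 * ℓ + k)) /
          Real.sqrt t ^ (2 * ℓ + k) * π) := by gcongr
    _ = (1 + (2 * ℓ + k).factorial / (4 / π ^ 2) ^ (2 * ℓ + k)) /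
          Real.sqrt t ^ (2 * ℓ + k) := by field_simp

/-- For all `k, ℓ ∈ ℕ` there is `C = C(k,ℓ) > 0` such that
`|∂_x^k ∂_t^ℓ H(t,x)| ≤ C t^{-(ℓ+k/2)}` for all `t > 0` and all `x ∈ ℝ`. -/
theorem stmt17 (k ℓ : ℕ) :
    ∃ C : ℝ, 0 < C ∧ ∀ (t : ℝ), 0 < t → ∀ x : ℝ,
      |iteratedDeriv k (fun x' => iteratedDeriv ℓ (fun t' => Hker t' x') t) x| ≤
        C * t ^ (-((ℓ : ℝ) + (k : ℝ) / 2)) := by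
  have hπ := pi_pos
  refine ⟨1 + (2 * ℓ + k).factorial / (4 / π ^ 2) ^ (2 * ℓ + k), by positivity, ?_⟩
  intro t ht x
  have hfeq : (fun x' => iteratedDeriv ℓ (fun t' => Hker t' x') t)
      = fun x' => Kfun ℓ 0 t x' := funext fun x' => iterT ℓ x' t
  rw [hfeq, iterX]
  have hb := Kbound ℓ k t ht x
  have hconv : Real.sqrt t ^ (2 * ℓ + k) = t ^ (((2 * ℓ + k : ℕ) : ℝ) / 2) := by
    rw [Real.sqrt_eq_rpow, ← Real.rpow_natCast (t ^ ((1:ℝ) / 2)) (2 * ℓ + k),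
      ← Real.rpow_mul ht.le]
    congr 1
    ring
  have hexp : (((2 * ℓ + k : ℕ) : ℝ) / 2) = ((ℓ : ℝ) + (k : ℝ) / 2) := by
    push_cast; ring
  rw [hconv, hexp] at hb
  rw [div_eq_mul_inv, ← Real.rpow_neg ht.le] at hb
  exact hb
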